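/- For all natural numbers m, n, every positive integer N, and every t ∈ [1/(N·2ⁿ + 2), 1/(N·2ⁿ + 2 − 2ⁿ)], one has g₁^[m]( ((N·2^{m+n} + 2^{m+1} + 2ⁿ)·t − 2^m) / ((N·2^{m+n} + 2^{m+1} + 2^{n+1})·t − 2^m) ) = g₂^[N](g₁^[n](t)). (Equivalently, the element g₁^{−m} g₂^{N} g₁^{n} acts on this interval by t ↦ ((N·2^{m+n}+2^{m+1}+2ⁿ)t − 2^m)/((N·2^{m+n}+2^{m+1}+2^{n+1})t − 2^m).) -/

import Mathlib

/-- The element `g₁` of the Lodha–Moore group as a piecewise fractional linear map. -/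
noncomputable def g₁ (t : ℝ) : ℝ :=
  if t ≤ 0 then t
  else if t ≤ 1 / 2 then 2 * t / (2 * t + 1)
  else if t ≤ 1 then 1 / (3 - 2 * t)
  else t

/-- The element `g₂` of the Lodha–Moore group as a piecewise fractional linear map. -/
noncomputable def g₂ (t : ℝ) : ℝ :=
  if t ≤ 0 then t
  else if t ≤ 1 / 3 then t / (1 - t)
  else if t ≤ 1 / 2 then (4 * t - 1) / (5 * t - 1)
  else if t ≤ 1 then 1 / (2 - t)
  else t

/-! The relevant branches of `g₁` and `g₂` become affine in the charts `u ↦ u⁻¹` near `0` and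
`w ↦ 1 - w⁻¹` near `1`: on `(0, 1/2]` and on `[1/2, 1)` the map `g₁` reads `u ↦ u / 2 + 1`, whose
`n`-th iterate is `u ↦ 2 + (u - 2) / 2ⁿ`; on `(0, 1/3]` the map `g₂` reads `u ↦ u - 1`, and from
`[1/3, 1/2]` it carries the chart at `0` to the chart at `1` by `u ↦ 5 - u`. Both sides of the
identity are then `1 - w⁻¹` for the same `w`. -/

open Function Set

theorem Set.MapsTo.iterate_apply_of_semiconjOn {α β : Type*} {e : β → α} {F : β → β}
    {f : α → α} {s : Set β} (hF : MapsTo F s s) (h : ∀ u ∈ s, f (e u) = e (F u)) (n : ℕ)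
    {u : β} (hu : u ∈ s) : f^[n] (e u) = e (F^[n] u) := by
  have hconj : Semiconj (e ∘ Subtype.val) (hF.restrict F s s) f := fun x => (h x x.2).symm
  simpa [hF.coe_iterate_restrict] using ((hconj.iterate_right n) ⟨u, hu⟩).symm

theorem iterate_div_two_add_one (n : ℕ) (u : ℝ) :
    (fun u : ℝ => u / 2 + 1)^[n] u = 2 + (u - 2) / 2 ^ n := by
  induction n with
  | zero => simp
  | succ n ih =>
    rw [iterate_succ_apply', ih]
    field_simp
    ring

theorem mapsTo_div_two_add_one : MapsTo (fun u : ℝ => u / 2 + 1) (Ici 2) (Ici 2) :=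
  fun u (hu : 2 ≤ u) => show 2 ≤ u / 2 + 1 by linarith

theorem g₁_inv {u : ℝ} (hu : 2 ≤ u) : g₁ u⁻¹ = (u / 2 + 1)⁻¹ := by
  have hpos : 0 < u⁻¹ := by positivity
  have hle : u⁻¹ ≤ 1 / 2 := by rw [one_div]; exact inv_anti₀ two_pos hu
  rw [g₁, if_neg hpos.not_ge, if_pos hle]
  field_simp
  ring

theorem g₁_one_sub_inv {w : ℝ} (hw : 2 ≤ w) : g₁ (1 - w⁻¹) = 1 - (w / 2 + 1)⁻¹ := by
  have hinv : w⁻¹ ≤ 1 / 2 := by rw [one_div]; exact inv_anti₀ two_pos hw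
  have hpos : 0 < w⁻¹ := by positivity
  rw [g₁, if_neg (by linarith)]
  rcases hw.eq_or_lt with rfl | hw
  · norm_num
  have hlt : w⁻¹ < 1 / 2 := by rw [one_div]; exact inv_strictAnti₀ two_pos hw
  rw [if_neg (by linarith), if_pos (by linarith)]
  have hw2 : w + 2 ≠ 0 := by linarith
  rw [show 3 - 2 * (1 - w⁻¹) = (w + 2) / w by field_simp; ring,
    show w / 2 + 1 = (w + 2) / 2 by ring, one_div_div, inv_div, eq_sub_iff_add_eq,
    ← add_div, div_self hw2]

theorem g₂_inv {u : ℝ} (hu : 3 ≤ u) : g₂ u⁻¹ = (u - 1)⁻¹ := by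
  have hpos : 0 < u⁻¹ := by positivity
  have hle : u⁻¹ ≤ 1 / 3 := by rw [one_div]; exact inv_anti₀ three_pos hu
  rw [g₂, if_neg hpos.not_ge, if_pos hle]
  have : u - 1 ≠ 0 := by linarith
  field_simp

theorem g₂_inv_of_mem_Icc {u : ℝ} (h2 : 2 ≤ u) (h3 : u ≤ 3) : g₂ u⁻¹ = 1 - (5 - u)⁻¹ := by
  rcases h3.eq_or_lt with rfl | h3
  · rw [g₂_inv le_rfl]
    norm_num
  have hgt : 1 / 3 < u⁻¹ := by rw [one_div]; exact inv_strictAnti₀ (by linarith) h3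
  have hle : u⁻¹ ≤ 1 / 2 := by rw [one_div]; exact inv_anti₀ two_pos h2
  rw [g₂, if_neg (by linarith), if_neg hgt.not_ge, if_pos hle]
  have : u ≠ 0 := by linarith
  have : 5 - u ≠ 0 := by linarith
  field_simp
  ring

theorem g₁_iterate_inv (n : ℕ) {u : ℝ} (hu : 2 ≤ u) :
    g₁^[n] u⁻¹ = (2 + (u - 2) / 2 ^ n)⁻¹ := by
  rw [mapsTo_div_two_add_one.iterate_apply_of_semiconjOn (fun v hv => g₁_inv hv) n hu,
    iterate_div_two_add_one]

theorem g₁_iterate_one_sub_inv (n : ℕ) {w : ℝ} (hw : 2 ≤ w) :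
    g₁^[n] (1 - w⁻¹) = 1 - (2 + (w - 2) / 2 ^ n)⁻¹ := by
  rw [mapsTo_div_two_add_one.iterate_apply_of_semiconjOn (e := fun w => 1 - w⁻¹)
    (fun v hv => g₁_one_sub_inv hv) n hw, iterate_div_two_add_one]

theorem g₂_iterate_inv (k : ℕ) {u : ℝ} (hu : k + 2 ≤ u) : g₂^[k] u⁻¹ = (u - k)⁻¹ := by
  induction k generalizing u with
  | zero => simp
  | succ k ih =>
    push_cast at hu
    rw [iterate_succ_apply, g₂_inv (by linarith), ih (by linarith)]
    congr 1
    push_cast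
    ring

theorem g₂_iterate_inv_of_mem_Icc {N : ℕ} (hN : 0 < N) {v : ℝ} (h1 : N + 1 ≤ v) (h2 : v ≤ N + 2) :
    g₂^[N] v⁻¹ = 1 - (N + 4 - v)⁻¹ := by
  obtain ⟨k, rfl⟩ := Nat.exists_eq_succ_of_ne_zero hN.ne'
  push_cast at h1 h2 ⊢
  rw [iterate_succ_apply', g₂_iterate_inv k (by linarith),
    g₂_inv_of_mem_Icc (by linarith) (by linarith)]
  ring_nf

theorem inv_mem_Icc_of_mem_Icc_one_div {a b t : ℝ} (ha : 0 < a) (hb : 0 < b)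
    (ht : t ∈ Icc (1 / b) (1 / a)) : t⁻¹ ∈ Icc a b := by
  have ht0 : 0 < t := (one_div_pos.mpr hb).trans_le ht.1
  simp only [one_div] at ht
  exact ⟨(le_inv_comm₀ ha ht0).mpr ht.2, (inv_le_comm₀ ht0 hb).mpr ht.1⟩

theorem normal_form_argument_eq (m n : ℕ) (N : ℝ) {u : ℝ} (hu : u ≠ 0)
    (hw : 2 + 2 ^ m * (N * 2 ^ n + 2 - u) / 2 ^ n ≠ 0) :
    ((N * 2 ^ (m + n) + 2 ^ (m + 1) + 2 ^ n) * u⁻¹ - 2 ^ m)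
        / ((N * 2 ^ (m + n) + 2 ^ (m + 1) + 2 ^ (n + 1)) * u⁻¹ - 2 ^ m)
      = 1 - (2 + 2 ^ m * (N * 2 ^ n + 2 - u) / 2 ^ n)⁻¹ := by
  set den := (N * 2 ^ (m + n) + 2 ^ (m + 1) + 2 ^ (n + 1)) * u⁻¹ - 2 ^ m with hden_def
  have hw_eq : 2 + 2 ^ m * (N * 2 ^ n + 2 - u) / 2 ^ n = den / (2 ^ n * u⁻¹) := by
    rw [hden_def]
    field_simp
    ring
  have hden : den ≠ 0 := fun h => hw (by rw [hw_eq, h, zero_div])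
  rw [hw_eq, inv_div, eq_sub_iff_add_eq, ← add_div, div_eq_one_iff_eq hden]
  ring

/-- The element `g₁⁻ᵐ g₂ᴺ g₁ⁿ` acts on `[1/(N·2ⁿ + 2), 1/(N·2ⁿ + 2 − 2ⁿ)]` by
`t ↦ ((N·2^(m+n) + 2^(m+1) + 2ⁿ)t − 2^m) / ((N·2^(m+n) + 2^(m+1) + 2^(n+1))t − 2^m)`. -/
theorem normal_form_action₂ (m n : ℕ) (N : ℕ) (hN : 0 < N) (t : ℝ)
    (ht : t ∈ Set.Icc (1 / ((N : ℝ) * 2 ^ n + 2)) (1 / ((N : ℝ) * 2 ^ n + 2 - 2 ^ n))) :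
    g₁^[m] ((((N : ℝ) * 2 ^ (m + n) + 2 ^ (m + 1) + 2 ^ n) * t - 2 ^ m)
        / (((N : ℝ) * 2 ^ (m + n) + 2 ^ (m + 1) + 2 ^ (n + 1)) * t - 2 ^ m))
      = g₂^[N] (g₁^[n] t) := by
  have hN1 : (1 : ℝ) ≤ N := by exact_mod_cast hN
  have h2n : (1 : ℝ) ≤ 2 ^ n := one_le_pow₀ one_le_two
  obtain ⟨hu_lo, hu_hi⟩ := inv_mem_Icc_of_mem_Icc_one_div (by nlinarith) (by positivity) ht
  obtain ⟨u, rfl⟩ : ∃ u : ℝ, t = u⁻¹ := ⟨t⁻¹, (inv_inv t).symm⟩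
  rw [inv_inv] at hu_lo hu_hi
  have hu2 : 2 ≤ u := by nlinarith
  have hv_lo : (N : ℝ) + 1 ≤ 2 + (u - 2) / 2 ^ n := by
    rw [← sub_le_iff_le_add', le_div_iff₀ (by positivity)]; nlinarith
  have hv_hi : 2 + (u - 2) / 2 ^ n ≤ (N : ℝ) + 2 := by
    rw [← le_sub_iff_add_le', div_le_iff₀ (by positivity)]; nlinarith
  have hw : 2 ≤ 2 + 2 ^ m * ((N : ℝ) * 2 ^ n + 2 - u) / 2 ^ n := le_add_of_nonneg_right (by
    have : 0 ≤ (N : ℝ) * 2 ^ n + 2 - u := by linarith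
    positivity)
  rw [normal_form_argument_eq m n N (by positivity) (by positivity), g₁_iterate_one_sub_inv m hw,
    g₁_iterate_inv n hu2, g₂_iterate_inv_of_mem_Icc hN hv_lo hv_hi]
  congr 2
  field_simp
  ring
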